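/- Let S = (V,H) be a near-matroid and let F, F' be flats of S with F ⊂ F' ⊂ V (strict inclusions). Then ρ(F) < ρ(F'), where ρ is the rank function assigning to each proper flat G the common cardinality of faces X ∈ H with cl(X) = G. -/
import Mathlib


open scoped Classical

variable {V : Type*}

/-- A (finite) simplicial complex on vertex set `V`: all singletons are faces and
faces are closed under taking subsets. -/
def IsSimplicialComplex [DecidableEq V] (H : Set (Finset V)) : Prop :=
  (∀ v : V, {v} ∈ H) ∧ ∀ X ∈ H, ∀ Y ⊆ X, Y ∈ H

/-- `F` is a flat of the complex with faces `H`. -/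
def IsFlat [DecidableEq V] (H : Set (Finset V)) (F : Finset V) : Prop :=
  ∀ I ∈ H, I ⊆ F → ∀ p ∉ F, insert p I ∈ H

/-- `X` is a facet (maximal face) of `H`. -/
def IsFacet (H : Set (Finset V)) (X : Finset V) : Prop :=
  X ∈ H ∧ ∀ Y ∈ H, X ⊆ Y → Y = X

/-- The `k`-truncation of the family of faces `H`. -/
def trunc (H : Set (Finset V)) (k : ℕ) : Set (Finset V) :=
  {X ∈ H | X.card ≤ k}

/-- `H` has dimension `d`: some face has `d+1` elements and all faces have at most `d+1`. -/
def HasDim (H : Set (Finset V)) (d : ℕ) : Prop :=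
  (∃ X ∈ H, X.card = d + 1) ∧ ∀ X ∈ H, X.card ≤ d + 1

/-- `H` is paving of dimension `d`: every `d`-subset is a face and the maximal face
cardinality is `d+1`. -/
def PavingDim (H : Set (Finset V)) (d : ℕ) : Prop :=
  (∀ X : Finset V, X.card = d → X ∈ H) ∧ (∃ X ∈ H, X.card = d + 1) ∧
    ∀ X ∈ H, X.card ≤ d + 1

/-- `X` is a transversal of the successive differences for a chain
`C 0 ⊆ C 1 ⊆ … ⊆ C k` in the family `F`, i.e. `X` enumerates as `x 0, …, x (k-1)`
with `x i ∈ C (i+1) \ C i`. -/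
def Transversal [DecidableEq V] (F : Set (Finset V)) (X : Finset V) : Prop :=
  ∃ (k : ℕ) (x : Fin k → V) (C : Fin (k + 1) → Finset V),
    Function.Injective x ∧
    X = Finset.image x Finset.univ ∧
    (∀ i, C i ∈ F) ∧
    (∀ i : Fin k, C i.castSucc ⊆ C i.succ) ∧
    (∀ i : Fin k, x i ∈ C i.succ ∧ x i ∉ C i.castSucc)

/-- The set of all transversals of the successive differences for chains in `F`. -/
def Tr [DecidableEq V] (F : Set (Finset V)) : Set (Finset V) :=
  {X | Transversal F X}

/-- `H` is boolean representable: its faces are exactly the transversals of the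
successive differences for chains in its lattice of flats. -/
def BooleanRepresentable [DecidableEq V] (H : Set (Finset V)) : Prop :=
  H = Tr {F | IsFlat H F}

/-- The family `ε(S)` for a complex of dimension `d`. -/
def eps [DecidableEq V] (H : Set (Finset V)) (d : ℕ) : Set (Finset V) :=
  {X | ∀ Y ∈ H, Y ⊆ X → Y.card ≤ d → ∀ p ∉ X, insert p Y ∈ H}

/-- `H` is a truncated boolean representable simplicial complex. -/
def IsTBRSC [DecidableEq V] (H : Set (Finset V)) : Prop :=
  ∃ (H' : Set (Finset V)) (k : ℕ), 1 ≤ k ∧ IsSimplicialComplex H' ∧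
    BooleanRepresentable H' ∧ H = trunc H' k

/-- The complex `B_d(V,L)`. -/
def Bd [DecidableEq V] (d : ℕ) (L : Finset V) : Set (Finset V) :=
  {X | X.card ≤ d} ∪ {X | X.card = d + 1 ∧ (X ∩ L).card = d}

/-- The closure of `X`: the intersection of all flats containing `X`. -/
noncomputable def cl [Fintype V] [DecidableEq V] (H : Set (Finset V)) (X : Finset V) :
    Finset V :=
  Finset.univ.filter fun v => ∀ F : Finset V, IsFlat H F → X ⊆ F → v ∈ F

/-- `H` is a near-matroid. -/
def NearMatroid [Fintype V] [DecidableEq V] (H : Set (Finset V)) : Prop :=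
  ∀ X ∈ H, ∀ Y ∈ H, cl H X = cl H Y → cl H X ≠ Finset.univ → X.card = Y.card

/-- `H` is a matroid: a simplicial complex with the exchange property. -/
def IsMatroid [DecidableEq V] (H : Set (Finset V)) : Prop :=
  IsSimplicialComplex H ∧
    ∀ I ∈ H, ∀ J ∈ H, I.card = J.card + 1 → ∃ i ∈ I, i ∉ J ∧ insert i J ∈ H

lemma subset_cl' [Fintype V] [DecidableEq V] (H : Set (Finset V)) (X : Finset V) :
    X ⊆ cl H X := by
  intro x hx
  simp only [cl, Finset.mem_filter, Finset.mem_univ, true_and]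
  exact fun G _ hXG => hXG hx

lemma cl_subset_flat [Fintype V] [DecidableEq V] (H : Set (Finset V)) {X G : Finset V}
    (hG : IsFlat H G) (hXG : X ⊆ G) : cl H X ⊆ G := by
  intro v hv
  simp only [cl, Finset.mem_filter, Finset.mem_univ, true_and] at hv
  exact hv G hG hXG

lemma cl_isFlat [Fintype V] [DecidableEq V] (H : Set (Finset V)) (X : Finset V) :
    IsFlat H (cl H X) := by
  intro I hI hIcl p hp
  simp only [cl, Finset.mem_filter, Finset.mem_univ, true_and, not_forall] at hp
  obtain ⟨G, hG, hXG, hpG⟩ := hp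
  exact hG I hI (fun i hi => cl_subset_flat H hG hXG (hIcl hi)) p hpG

lemma aux_rank [Fintype V] [DecidableEq V] (H : Set (Finset V)) (hNM : NearMatroid H)
    (F' : Finset V) (hF' : IsFlat H F') (hne : F' ≠ Finset.univ) :
    ∀ n : ℕ, ∀ W ∈ H, W ⊆ F' → F'.card - (cl H W).card ≤ n →
      ∀ Y ∈ H, cl H Y = F' → W.card ≤ Y.card := by
  intro n
  induction n with
  | zero =>
    intro W hW hWF' hcard Y hY hclY
    have hsub : cl H W ⊆ F' := cl_subset_flat H hF' hWF'
    have hle : F'.card ≤ (cl H W).card := by omega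
    have heq : cl H W = F' := Finset.eq_of_subset_of_card_le hsub hle
    have := hNM W hW Y hY (by rw [heq, hclY]) (by rw [heq]; exact hne)
    omega
  | succ n ih =>
    intro W hW hWF' hcard Y hY hclY
    have hsub : cl H W ⊆ F' := cl_subset_flat H hF' hWF'
    by_cases heq : cl H W = F'
    · have := hNM W hW Y hY (by rw [heq, hclY]) (by rw [heq]; exact hne)
      omega
    · obtain ⟨q, hqF', hqcl⟩ := Finset.exists_of_ssubset (hsub.ssubset_of_ne heq)
      have hW' : insert q W ∈ H :=
        cl_isFlat H W W hW (subset_cl' H W) q hqcl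
      have hW'F' : insert q W ⊆ F' := Finset.insert_subset hqF' hWF'
      have hmono : cl H W ⊆ cl H (insert q W) := by
        apply cl_subset_flat H (cl_isFlat H (insert q W))
        exact (Finset.subset_insert q W).trans (subset_cl' H _)
      have hqcl' : q ∈ cl H (insert q W) := subset_cl' H _ (Finset.mem_insert_self q W)
      have hlt : (cl H W).card < (cl H (insert q W)).card :=
        Finset.card_lt_card (hmono.ssubset_of_ne (by
          intro h; rw [← h] at hqcl'; exact hqcl hqcl'))
      have hle : W.card < (insert q W).card := by
        rw [Finset.card_insert_of_notMem (fun h => hqcl (subset_cl' H W h))]; omega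
      have := ih (insert q W) hW' hW'F' (by
        have := Finset.card_le_card (cl_subset_flat H hF' hW'F')
        omega) Y hY hclY
      omega

theorem stmt_18 [Fintype V] [DecidableEq V] [Nonempty V] (H : Set (Finset V))
    (hS : IsSimplicialComplex H) (hNM : NearMatroid H) (F F' : Finset V)
    (hF : IsFlat H F) (hF' : IsFlat H F') (h1 : F ⊂ F') (h2 : F' ⊂ Finset.univ) :
    ∀ X ∈ H, cl H X = F → ∀ Y ∈ H, cl H Y = F' → X.card < Y.card := by
  intro X hX hclX Y hY hclY
  obtain ⟨p, hpF', hpF⟩ := Finset.exists_of_ssubset h1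
  have hXF : X ⊆ F := hclX ▸ subset_cl' H X
  have hpX : insert p X ∈ H := hF X hX hXF p hpF
  have hsub : insert p X ⊆ F' := Finset.insert_subset hpF' (hXF.trans h1.subset)
  have hcard : (insert p X).card = X.card + 1 :=
    Finset.card_insert_of_notMem (fun h => hpF (hXF h))
  have := aux_rank H hNM F' hF' h2.ne (F'.card - (cl H (insert p X)).card)
    (insert p X) hpX hsub le_rfl Y hY hclY
  omega
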